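/- Let n ≥ 1, let G : ℝⁿ → (n×n real symmetric matrices) be smooth with G(q) invertible for every q, and let V : ℝⁿ → ℝ be smooth with V(q) ≠ 0 for every q. Suppose smooth functions χ, ξ¹,…,ξⁿ, ω, f of the variables (t,q,N) ∈ ℝ × ℝⁿ × (0,∞) satisfy the variational-symmetry criterion pr¹X(L) + L·D(χ) = D(f) identically in (t,q,N,v,w) with N > 0. Then: χ is independent of q and N (a function of t alone); each ξ^α is independent of t and N (a function of q alone); f is constant; ω = −N·(Σ_α ξ^α ∂V/∂q^α)/V − N·dχ/dt; and, setting τ(q) := −(Σ_α ξ^α ∂V/∂q^α)/V, the vector field ξ satisfies £_ξ G = τ·G and £_ξ V = −τ·V. -/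

import Mathlib

open scoped BigOperators

/-- Partial derivative `∂f/∂q^α` of a scalar function on `ℝⁿ`. -/
noncomputable def pd {n : ℕ} (f : (Fin n → ℝ) → ℝ) (α : Fin n) (q : Fin n → ℝ) : ℝ :=
  fderiv ℝ f q (Pi.single α 1)

/-- Lie derivative `(£_ξ G)_{μν}`. -/
noncomputable def lieG {n : ℕ} (ξ : (Fin n → ℝ) → Fin n → ℝ)
    (G : (Fin n → ℝ) → Fin n → Fin n → ℝ) (q : Fin n → ℝ) (μ ν : Fin n) : ℝ :=
  ∑ α : Fin n, (ξ q α * pd (fun p => G p μ ν) α q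
      + pd (fun p => ξ p α) μ q * G q α ν
      + pd (fun p => ξ p α) ν q * G q μ α)

/-- Lie derivative `£_ξ V`. -/
noncomputable def lieV {n : ℕ} (ξ : (Fin n → ℝ) → Fin n → ℝ)
    (V : (Fin n → ℝ) → ℝ) (q : Fin n → ℝ) : ℝ :=
  ∑ α : Fin n, ξ q α * pd V α q

/-- `∂g/∂t` for a function `g(t,q,N)` on `ℝ × ℝⁿ × ℝ`. -/
noncomputable def Dt {n : ℕ} (g : ℝ × (Fin n → ℝ) × ℝ → ℝ) (x : ℝ × (Fin n → ℝ) × ℝ) : ℝ :=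
  fderiv ℝ g x (1, 0, 0)

/-- `∂g/∂q^β` for a function `g(t,q,N)`. -/
noncomputable def Dq {n : ℕ} (g : ℝ × (Fin n → ℝ) × ℝ → ℝ) (β : Fin n)
    (x : ℝ × (Fin n → ℝ) × ℝ) : ℝ :=
  fderiv ℝ g x (0, Pi.single β 1, 0)

/-- `∂g/∂N` for a function `g(t,q,N)`. -/
noncomputable def DN {n : ℕ} (g : ℝ × (Fin n → ℝ) × ℝ → ℝ) (x : ℝ × (Fin n → ℝ) × ℝ) : ℝ :=
  fderiv ℝ g x (0, 0, 1)

/-- Total derivative operator `D(g)(t,q,N,v,w) = ∂g/∂t + Σ_β v^β ∂g/∂q^β + w ∂g/∂N`. -/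
noncomputable def Dtot {n : ℕ} (g : ℝ × (Fin n → ℝ) × ℝ → ℝ) (x : ℝ × (Fin n → ℝ) × ℝ)
    (v : Fin n → ℝ) (w : ℝ) : ℝ :=
  Dt g x + (∑ β : Fin n, v β * Dq g β x) + w * DN g x

/-!
At a point with positive lapse `N`, the criterion is a polynomial identity in the velocities
`v` and `w`. Replacing `v` by `s • v` makes it a cubic in `s`, affine in `w`, so every
coefficient vanishes. As `G` is symmetric and invertible, its quadratic form is not identically
zero, and the coefficients give: `∂_N χ = ∂_N ξ = ∂_N f = 0`, `∂_q χ = 0`,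
`(∂_t ξ)ᵀ G = N ∂_q f`, the polarized quadratic coefficient `£_ξ G = (ω / N + ∂_t χ) G`, and
`N ξ·∂V + ω V + N V ∂_t χ + ∂_t f = 0`.

So `ξ` and `f`, with all their derivatives, do not depend on `N`. Comparing the identities at
the lapses `N` and `2 N` kills their parts proportional to `N`: `∂_q f = 0`, hence `∂_t ξ = 0`,
and `ω / N + ∂_t χ = -ξ·∂V / V` with `∂_t f = 0`. The mean value theorem turns vanishing
partial derivatives into independence of the corresponding variables.
-/

open Matrix Topology

section PolynomialIdentities
variable {ι : Type*} [Fintype ι]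

lemma eq_zero_of_forall_cubic_eq_zero {a b c d : ℝ}
    (h : ∀ s : ℝ, a + b * s + c * s ^ 2 + d * s ^ 3 = 0) :
    a = 0 ∧ b = 0 ∧ c = 0 ∧ d = 0 := by
  have h₀ := h 0; have h₁ := h 1; have h₂ := h (-1); have h₃ := h 2
  norm_num at h₀ h₁ h₂ h₃
  refine ⟨h₀, ?_, ?_, ?_⟩ <;> linarith

lemma add_transpose_eq_zero_of_forall_dotProduct_mulVec_self [DecidableEq ι] {T : Matrix ι ι ℝ}
    (h : ∀ v, v ⬝ᵥ T *ᵥ v = 0) : T + Tᵀ = 0 := by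
  ext μ ν
  have hμ := h (Pi.single μ 1)
  have hν := h (Pi.single ν 1)
  have hμν := h (Pi.single μ 1 + Pi.single ν 1)
  simp only [mulVec_add, add_dotProduct, dotProduct_add, mulVec_single, single_dotProduct,
    MulOpposite.op_one, col_apply, one_smul, one_mul, Matrix.add_apply,
    transpose_apply, Matrix.zero_apply] at hμ hν hμν ⊢
  linarith

lemma exists_dotProduct_mulVec_self_ne_zero [DecidableEq ι] [Nonempty ι] {g : Matrix ι ι ℝ}
    (hg : gᵀ = g) (hdet : g.det ≠ 0) : ∃ v, v ⬝ᵥ g *ᵥ v ≠ 0 := by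
  by_contra! h
  have h2 := add_transpose_eq_zero_of_forall_dotProduct_mulVec_self h
  rw [hg, ← two_smul ℝ, smul_eq_zero] at h2
  exact hdet (by simp [h2.resolve_left two_ne_zero])

lemma eq_zero_of_forall_dotProduct_mulVec_self_mul_dotProduct {g : Matrix ι ι ℝ} {c : ι → ℝ}
    (hg : ∃ v, v ⬝ᵥ g *ᵥ v ≠ 0) (h : ∀ v, (v ⬝ᵥ g *ᵥ v) * (v ⬝ᵥ c) = 0) : c = 0 := by
  obtain ⟨v₀, hv₀⟩ := hg
  have hℓ : v₀ ⬝ᵥ c = 0 := (mul_eq_zero.mp (h v₀)).resolve_left hv₀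
  have := eq_zero_of_forall_cubic_eq_zero (a := 0) (d := (c ⬝ᵥ g *ᵥ c) * (c ⬝ᵥ c))
    (b := (v₀ ⬝ᵥ g *ᵥ v₀) * (c ⬝ᵥ c)) (c := (v₀ ⬝ᵥ g *ᵥ c + c ⬝ᵥ g *ᵥ v₀) * (c ⬝ᵥ c)) fun s => by
    have := h (v₀ + s • c)
    simp only [mulVec_add, mulVec_smul, add_dotProduct, dotProduct_add, smul_dotProduct,
      dotProduct_smul, hℓ, smul_eq_mul] at this
    linear_combination this
  exact dotProduct_self_eq_zero.mp ((mul_eq_zero.mp this.2.1).resolve_left hv₀)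

lemma sum_sum_mul_mul_eq_dotProduct_mulVec (M : Matrix ι ι ℝ)
    (v : ι → ℝ) : ∑ κ, ∑ l, M κ l * v κ * v l = v ⬝ᵥ M *ᵥ v := by
  simp only [dotProduct, mulVec, Finset.mul_sum]
  exact Finset.sum_congr rfl fun _ _ => Finset.sum_congr rfl fun _ _ => by ring

section CriterionCoefficients
/- The criterion at one point, in matrix form: `g = G(q)`, `B = Σ ξ^α ∂_α G`, `K β α = ∂_β ξ^α`,
`a, b = ∂_t ξ, ∂_N ξ`, `dχ, df = ∂_q χ, ∂_q f`, and `c = Σ ξ^α ∂_α V`. -/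
variable {g B K : Matrix ι ι ℝ} {a b dχ df : ι → ℝ}
  {N c ω V χt χN ft fN : ℝ}

theorem coeffs_eq_zero_of_criterion (hN : N ≠ 0) (h : ∀ (v : ι → ℝ) (w : ℝ),
    1 / (2 * N) * (v ⬝ᵥ B *ᵥ v) - N * c + ω * (-(1 / (2 * N ^ 2)) * (v ⬝ᵥ g *ᵥ v) - V)
      + 1 / N * ((a + v ᵥ* K + w • b - (χt + v ⬝ᵥ dχ + w * χN) • v) ⬝ᵥ g *ᵥ v)
      + (1 / (2 * N) * (v ⬝ᵥ g *ᵥ v) - N * V) * (χt + v ⬝ᵥ dχ + w * χN)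
      = ft + v ⬝ᵥ df + w * fN) (v : ι → ℝ) :
    (N * c + ω * V + N * V * χt + ft = 0
      ∧ a ⬝ᵥ g *ᵥ v - N ^ 2 * V * (v ⬝ᵥ dχ) - N * (v ⬝ᵥ df) = 0
      ∧ v ⬝ᵥ B *ᵥ v + 2 * (v ⬝ᵥ (K * g) *ᵥ v) - (ω / N + χt) * (v ⬝ᵥ g *ᵥ v) = 0
      ∧ (v ⬝ᵥ g *ᵥ v) * (v ⬝ᵥ dχ) = 0)
    ∧ (N * V * χN + fN = 0 ∧ b ⬝ᵥ g *ᵥ v = 0 ∧ (v ⬝ᵥ g *ᵥ v) * χN = 0) := by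
  have scaled := fun (s w : ℝ) => by
    have := h (s • v) w
    simp only [mulVec_smul, smul_dotProduct, dotProduct_smul, add_dotProduct, sub_dotProduct,
      smul_eq_mul, smul_vecMul, ← dotProduct_mulVec, mulVec_mulVec] at this
    exact this
  have w_free : ∀ s : ℝ, -(N * c + ω * V + N * V * χt + ft)
      + (1 / N * (a ⬝ᵥ g *ᵥ v) - N * V * (v ⬝ᵥ dχ) - v ⬝ᵥ df) * s
      + 1 / (2 * N) * (v ⬝ᵥ B *ᵥ v + 2 * (v ⬝ᵥ (K * g) *ᵥ v) - (ω / N + χt) * (v ⬝ᵥ g *ᵥ v))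
        * s ^ 2
      + -(1 / (2 * N)) * ((v ⬝ᵥ g *ᵥ v) * (v ⬝ᵥ dχ)) * s ^ 3 = 0 := fun s => by
    linear_combination scaled s 0
  have w_coeff : ∀ s : ℝ, -(N * V * χN + fN) + 1 / N * (b ⬝ᵥ g *ᵥ v) * s
      + -(1 / (2 * N)) * ((v ⬝ᵥ g *ᵥ v) * χN) * s ^ 2 + 0 * s ^ 3 = 0 := fun s => by
    linear_combination scaled s 1 - scaled s 0
  obtain ⟨a₀, b₀, c₀, d₀⟩ := eq_zero_of_forall_cubic_eq_zero w_free
  obtain ⟨a₁, b₁, c₁, -⟩ := eq_zero_of_forall_cubic_eq_zero w_coeff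
  refine ⟨⟨by linear_combination -a₀, ?_, ?_, ?_⟩, by linear_combination -a₁, ?_, ?_⟩
  · field_simp at b₀
    linear_combination b₀
  · simpa [hN] using c₀
  · simpa [hN] using d₀
  · simpa [hN] using b₁
  · simpa [hN] using c₁

end CriterionCoefficients

end PolynomialIdentities

section Calculus
variable {n : ℕ}

abbrev positiveLapse (n : ℕ) : Set (ℝ × (Fin n → ℝ) × ℝ) := {x | 0 < x.2.2}

lemma isOpen_positiveLapse : IsOpen (positiveLapse n) :=
  isOpen_lt continuous_const (continuous_snd.comp continuous_snd)

lemma convex_positiveLapse : Convex ℝ (positiveLapse n) :=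
  convex_halfSpace_gt ⟨fun _ _ => rfl, fun _ _ => rfl⟩ 0

lemma fderiv_apply_eq_partials (g : ℝ × (Fin n → ℝ) × ℝ → ℝ) (x : ℝ × (Fin n → ℝ) × ℝ)
    (a : ℝ) (b : Fin n → ℝ) (c : ℝ) :
    fderiv ℝ g x (a, b, c) = a * Dt g x + ∑ β, b β * Dq g β x + c * DN g x := by
  have hdecomp : ((a, b, c) : ℝ × (Fin n → ℝ) × ℝ)
      = a • (1, 0, 0) + ∑ β, b β • (0, Pi.single β 1, 0) + c • (0, 0, 1) := by
    ext <;> simp [Prod.fst_sum, Prod.snd_sum, Pi.single_apply]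
  rw [hdecomp]
  simp only [map_add, map_sum, map_smul, smul_eq_mul]
  rfl

lemma eq_of_fderiv_apply_sub_eq_zero {E : Type*} [NormedAddCommGroup E] [NormedSpace ℝ E]
    {g : E → ℝ} {s : Set E} (hs : Convex ℝ s) (hso : IsOpen s) (hg : DifferentiableOn ℝ g s)
    {x y : E} (hx : x ∈ s) (hy : y ∈ s) (h : ∀ z ∈ s, fderiv ℝ g z (y - x) = 0) : g x = g y := by
  obtain ⟨z, hz, hgz⟩ := domain_mvt
    (fun z hz => (hg.differentiableAt (hso.mem_nhds hz)).hasFDerivAt.hasFDerivWithinAt) hs hx hy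
  linarith [h z (hs.segment_subset hx hy hz)]

def LapseInvariant {β : Type*} (g : ℝ × (Fin n → ℝ) × ℝ → β) : Prop :=
  ∀ t q N N', 0 < N → 0 < N' → g (t, q, N) = g (t, q, N')

lemma LapseInvariant.fderiv {F : Type*} [NormedAddCommGroup F] [NormedSpace ℝ F]
    {g : ℝ × (Fin n → ℝ) × ℝ → F} (hg : LapseInvariant g) :
    LapseInvariant (fderiv ℝ g) := by
  intro t q N N' hN hN'
  have hcont : Continuous fun y : ℝ × (Fin n → ℝ) × ℝ => y.2.2 :=
    continuous_snd.comp continuous_snd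
  have hshift : (fun y => g (y + (0, 0, N' - N))) =ᶠ[𝓝 (t, q, N)] g := by
    filter_upwards [continuousAt_const.eventually_lt hcont.continuousAt hN,
      continuousAt_const.eventually_lt hcont.continuousAt (show N - N' < N by linarith)]
      with ⟨s, p, M⟩ hM hM'
    simpa using hg s p (M + (N' - N)) M (by simp only at hM'; linarith) hM
  rw [← hshift.fderiv_eq, fderiv_comp_add_right]
  congr
  simp

lemma LapseInvariant.apply {ι β : Type*} {g : ℝ × (Fin n → ℝ) × ℝ → ι → β}
    (hg : LapseInvariant g) (i : ι) : LapseInvariant fun x => g x i :=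
  fun t q N N' hN hN' => congrFun (hg t q N N' hN hN') i

lemma LapseInvariant.Dt_eq {g : ℝ × (Fin n → ℝ) × ℝ → ℝ} (hg : LapseInvariant g) {t : ℝ}
    {q : Fin n → ℝ} {N N' : ℝ} (hN : 0 < N) (hN' : 0 < N') : Dt g (t, q, N) = Dt g (t, q, N') := by
  rw [Dt, Dt, hg.fderiv t q N N' hN hN']

lemma LapseInvariant.Dq_eq {g : ℝ × (Fin n → ℝ) × ℝ → ℝ} (hg : LapseInvariant g) {t : ℝ}
    {q : Fin n → ℝ} {N N' : ℝ} (hN : 0 < N) (hN' : 0 < N') (β : Fin n) :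
    Dq g β (t, q, N) = Dq g β (t, q, N') := by
  rw [Dq, Dq, hg.fderiv t q N N' hN hN']

lemma eq_of_partials_eq_zero {g : ℝ × (Fin n → ℝ) × ℝ → ℝ}
    (hg : DifferentiableOn ℝ g (positiveLapse n))
    {x y : ℝ × (Fin n → ℝ) × ℝ} (hx : x ∈ positiveLapse n) (hy : y ∈ positiveLapse n)
    (h : ∀ z ∈ positiveLapse n, (y.1 - x.1) * Dt g z + ∑ β, (y.2.1 - x.2.1) β * Dq g β z
      + (y.2.2 - x.2.2) * DN g z = 0) : g x = g y :=
  eq_of_fderiv_apply_sub_eq_zero convex_positiveLapse isOpen_positiveLapse hg hx hy fun z hz => by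
    rw [← h z hz, ← fderiv_apply_eq_partials]
    rfl

lemma lapseInvariant_of_DN_eq_zero {g : ℝ × (Fin n → ℝ) × ℝ → ℝ}
    (hg : DifferentiableOn ℝ g (positiveLapse n)) (h : ∀ x ∈ positiveLapse n, DN g x = 0) :
    LapseInvariant g := fun t q N N' hN hN' =>
  eq_of_partials_eq_zero hg hN hN' fun z hz => by simp [h z hz]

lemma pd_eq_Dq {g : ℝ × (Fin n → ℝ) × ℝ → ℝ} {t : ℝ} {q : Fin n → ℝ} {N : ℝ}
    (hg : DifferentiableAt ℝ g (t, q, N)) (β : Fin n) :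
    pd (fun p => g (t, p, N)) β q = Dq g β (t, q, N) := by
  have hslice : HasFDerivAt (fun p : Fin n → ℝ => ((t, p, N) : ℝ × (Fin n → ℝ) × ℝ))
      ((0 : (Fin n → ℝ) →L[ℝ] ℝ).prod ((ContinuousLinearMap.id ℝ _).prod 0)) q :=
    (hasFDerivAt_const t q).prodMk ((hasFDerivAt_id q).prodMk (hasFDerivAt_const N q))
  have hcomp : HasFDerivAt (fun p => g (t, p, N)) _ q := hg.hasFDerivAt.comp q hslice
  rw [pd, hcomp.fderiv]
  rfl

end Calculus

section Criterion
variable {n : ℕ} {G : (Fin n → ℝ) → Fin n → Fin n → ℝ} {V : (Fin n → ℝ) → ℝ}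
  {χ ω f : ℝ × (Fin n → ℝ) × ℝ → ℝ} {ξ : ℝ × (Fin n → ℝ) × ℝ → Fin n → ℝ}

variable (G V χ ω f ξ) in
def SymmetryCriterionAt (x : ℝ × (Fin n → ℝ) × ℝ) : Prop :=
  ∀ v : Fin n → ℝ, ∀ w : ℝ,
    (∑ α : Fin n, ξ x α *
          ((1 / (2 * x.2.2)) * (∑ κ : Fin n, ∑ lam : Fin n,
              pd (fun p => G p κ lam) α x.2.1 * v κ * v lam)
            - x.2.2 * pd V α x.2.1))
      + ω x * (-(1 / (2 * x.2.2 ^ 2)) * (∑ κ : Fin n, ∑ lam : Fin n,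
              G x.2.1 κ lam * v κ * v lam) - V x.2.1)
      + (∑ α : Fin n, (Dtot (fun y => ξ y α) x v w - v α * Dtot χ x v w) *
          ((1 / (2 * x.2.2)) * ((∑ κ : Fin n, G x.2.1 κ α * v κ)
            + (∑ lam : Fin n, G x.2.1 α lam * v lam))))
      + ((1 / (2 * x.2.2)) * (∑ κ : Fin n, ∑ lam : Fin n, G x.2.1 κ lam * v κ * v lam)
          - x.2.2 * V x.2.1) * Dtot χ x v w
      = Dtot f x v w

variable (G ξ) in
noncomputable def metricDerivAlong (x : ℝ × (Fin n → ℝ) × ℝ) : Matrix (Fin n) (Fin n) ℝ :=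
  ∑ α, ξ x α • of fun κ l => pd (fun p => G p κ l) α x.2.1

variable (ξ) in
noncomputable def fieldGradient (x : ℝ × (Fin n → ℝ) × ℝ) : Matrix (Fin n) (Fin n) ℝ :=
  of fun β α => Dq (fun y => ξ y α) β x

variable (G V χ ω f ξ) in
structure SymmetryConditionsAt (x : ℝ × (Fin n → ℝ) × ℝ) : Prop where
  DN_χ : DN χ x = 0
  DN_ξ : ∀ α, DN (fun y => ξ y α) x = 0
  DN_f : DN f x = 0
  Dq_χ : ∀ β, Dq χ β x = 0
  Dt_ξ_vecMul : (fun α => Dt (fun y => ξ y α) x) ᵥ* of (G x.2.1) = x.2.2 • fun β => Dq f β x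
  lie : metricDerivAlong G ξ x + fieldGradient ξ x * of (G x.2.1)
      + (fieldGradient ξ x * of (G x.2.1))ᵀ = (ω x / x.2.2 + Dt χ x) • of (G x.2.1)
  velocity_free : x.2.2 * ∑ α, ξ x α * pd V α x.2.1 + ω x * V x.2.1 + x.2.2 * V x.2.1 * Dt χ x
    + Dt f x = 0

theorem SymmetryCriterionAt.matrix_form (hGsymm : ∀ q μ ν, G q μ ν = G q ν μ)
    {x : ℝ × (Fin n → ℝ) × ℝ} (h : SymmetryCriterionAt G V χ ω f ξ x) (v : Fin n → ℝ) (w : ℝ) :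
    1 / (2 * x.2.2) * (v ⬝ᵥ metricDerivAlong G ξ x *ᵥ v) - x.2.2 * (ξ x ⬝ᵥ fun α => pd V α x.2.1)
      + ω x * (-(1 / (2 * x.2.2 ^ 2)) * (v ⬝ᵥ G x.2.1 *ᵥ v) - V x.2.1)
      + 1 / x.2.2 * (((fun α => Dt (fun y => ξ y α) x) + v ᵥ* fieldGradient ξ x
          + w • (fun α => DN (fun y => ξ y α) x) - Dtot χ x v w • v) ⬝ᵥ G x.2.1 *ᵥ v)
      + (1 / (2 * x.2.2) * (v ⬝ᵥ G x.2.1 *ᵥ v) - x.2.2 * V x.2.1) * Dtot χ x v w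
    = Dtot f x v w := by
  rw [SymmetryCriterionAt] at h
  set N := x.2.2
  set g : Matrix (Fin n) (Fin n) ℝ := G x.2.1
  have hT1 : ∑ α, ξ x α * (1 / (2 * N) * ∑ κ, ∑ l, pd (fun p => G p κ l) α x.2.1 * v κ * v l
        - N * pd V α x.2.1)
      = 1 / (2 * N) * (v ⬝ᵥ metricDerivAlong G ξ x *ᵥ v) - N * (ξ x ⬝ᵥ fun α => pd V α x.2.1) := by
    simp only [metricDerivAlong, sum_mulVec, dotProduct_sum, smul_mulVec, dotProduct_smul,
      smul_eq_mul, ← sum_sum_mul_mul_eq_dotProduct_mulVec, of_apply]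
    simp only [dotProduct, Finset.mul_sum, mul_sub, Finset.sum_sub_distrib]
    congr 1
    · exact Finset.sum_congr rfl fun _ _ => Finset.sum_congr rfl fun _ _ =>
        Finset.sum_congr rfl fun _ _ => by ring
    · exact Finset.sum_congr rfl fun _ _ => by ring
  have hT3 : ∑ α, (Dtot (fun y => ξ y α) x v w - v α * Dtot χ x v w)
        * (1 / (2 * N) * (∑ κ, g κ α * v κ + ∑ l, g α l * v l))
      = 1 / N * (((fun α => Dt (fun y => ξ y α) x) + v ᵥ* fieldGradient ξ x
          + w • (fun α => DN (fun y => ξ y α) x) - Dtot χ x v w • v) ⬝ᵥ g *ᵥ v) := by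
    have hgv : ∀ α, ∑ κ, g κ α * v κ + ∑ l, g α l * v l = 2 * (g *ᵥ v) α := fun α => by
      rw [two_mul]
      congr 1
      exact Finset.sum_congr rfl fun κ _ => by rw [show g κ α = g α κ from hGsymm _ _ _]
    simp only [hgv, dotProduct, Finset.mul_sum]
    refine Finset.sum_congr rfl fun α _ => ?_
    simp only [Pi.add_apply, Pi.sub_apply, Pi.smul_apply, smul_eq_mul, Dtot, vecMul, dotProduct,
      fieldGradient, of_apply]
    ring
  rw [← h v w, hT1, hT3, sum_sum_mul_mul_eq_dotProduct_mulVec g]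

lemma metricDerivAlong_transpose (hGsymm : ∀ q μ ν, G q μ ν = G q ν μ)
    (x : ℝ × (Fin n → ℝ) × ℝ) : (metricDerivAlong G ξ x)ᵀ = metricDerivAlong G ξ x := by
  ext μ ν
  simp only [metricDerivAlong, transpose_apply, Matrix.sum_apply, Matrix.smul_apply, of_apply,
    smul_eq_mul]
  refine Finset.sum_congr rfl fun α _ => ?_
  rw [show (fun p => G p ν μ) = fun p => G p μ ν from funext fun p => hGsymm p ν μ]

theorem SymmetryCriterionAt.symmetryConditionsAt (hn : 1 ≤ n) (hGsymm : ∀ q μ ν, G q μ ν = G q ν μ)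
    {x : ℝ × (Fin n → ℝ) × ℝ} (hx : 0 < x.2.2) (hGinv : (of fun μ ν => G x.2.1 μ ν).det ≠ 0)
    (h : SymmetryCriterionAt G V χ ω f ξ x) : SymmetryConditionsAt G V χ ω f ξ x := by
  have : Nonempty (Fin n) := ⟨⟨0, hn⟩⟩
  set g : Matrix (Fin n) (Fin n) ℝ := of (G x.2.1)
  have hg : gᵀ = g := by ext μ ν; exact hGsymm _ _ _
  have coeffs := coeffs_eq_zero_of_criterion (g := g) hx.ne' (h.matrix_form hGsymm)
  obtain ⟨v₀, hv₀⟩ := exists_dotProduct_mulVec_self_ne_zero hg hGinv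
  have hχN : DN χ x = 0 := (mul_eq_zero.mp (coeffs v₀).2.2.2).resolve_left hv₀
  have hdχ : (fun β => Dq χ β x) = 0 :=
    eq_zero_of_forall_dotProduct_mulVec_self_mul_dotProduct ⟨v₀, hv₀⟩ fun v => (coeffs v).1.2.2.2
  refine ⟨hχN, congrFun ((nondegenerate_of_det_ne_zero hGinv).eq_zero_of_ortho
      fun v => (coeffs v).2.2.1), by simpa [hχN] using (coeffs v₀).2.1, congrFun hdχ, ?_, ?_,
    (coeffs 0).1.1⟩
  · set a := fun α => Dt (fun y => ξ y α) x
    set df := fun β => Dq f β x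
    have hortho : ∀ v, (a ᵥ* g - x.2.2 • df) ⬝ᵥ v = 0 := fun v => by
      have := (coeffs v).1.2.1
      rw [hdχ, dotProduct_zero, dotProduct_mulVec] at this
      rw [sub_dotProduct, smul_dotProduct, smul_eq_mul, dotProduct_comm df]
      linear_combination this
    exact sub_eq_zero.mp (dotProduct_self_eq_zero.mp (hortho _))
  · set B := metricDerivAlong G ξ x
    set K := fieldGradient ξ x
    have hpolar := add_transpose_eq_zero_of_forall_dotProduct_mulVec_self
      (T := B + K * g + K * g - (ω x / x.2.2 + Dt χ x) • g) fun v => by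
        simp only [add_mulVec, sub_mulVec, smul_mulVec, dotProduct_add, dotProduct_sub,
          dotProduct_smul, smul_eq_mul]
        linear_combination (coeffs v).1.2.2.1
    have hB : Bᵀ = B := metricDerivAlong_transpose hGsymm x
    simp only [transpose_add, transpose_sub, transpose_smul, hg, hB] at hpolar
    linear_combination (norm := module) (2⁻¹ : ℝ) • hpolar
end Criterion

section Global
variable {n : ℕ} {G : (Fin n → ℝ) → Fin n → Fin n → ℝ} {V : (Fin n → ℝ) → ℝ}
  {χ ω f : ℝ × (Fin n → ℝ) × ℝ → ℝ} {ξ : ℝ × (Fin n → ℝ) × ℝ → Fin n → ℝ}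

theorem Dq_f_eq_zero_and_Dt_ξ_eq_zero (hGinv : ∀ q, (of fun μ ν => G q μ ν).det ≠ 0)
    (hξ : LapseInvariant ξ) (hf : LapseInvariant f)
    (hP : ∀ x ∈ positiveLapse n, SymmetryConditionsAt G V χ ω f ξ x) :
    ∀ x ∈ positiveLapse n, (∀ β, Dq f β x = 0) ∧ ∀ α, Dt (fun y => ξ y α) x = 0 := by
  rintro ⟨t, q, N⟩ (hN : 0 < N)
  have h2N : 0 < 2 * N := by positivity
  have hvec : _ ᵥ* of (G q) = N • _ := (hP (t, q, N) hN).Dt_ξ_vecMul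
  have hvec₂ := (hP (t, q, 2 * N) h2N).Dt_ξ_vecMul
  rw [funext fun α => (hξ.apply α).Dt_eq h2N hN, funext (hf.Dq_eq h2N hN)] at hvec₂
  have hdf : (fun β => Dq f β (t, q, N)) = 0 := by
    have : N • (fun β => Dq f β (t, q, N)) = 0 := by
      linear_combination (norm := module) hvec - hvec₂
    exact (smul_eq_zero.mp this).resolve_left hN.ne'
  refine ⟨congrFun hdf, congrFun (eq_zero_of_vecMul_eq_zero (hGinv q) ?_)⟩
  rw [hvec, hdf, smul_zero]

lemma LapseInvariant.metricDerivAlong_eq (hξ : LapseInvariant ξ) {t : ℝ} {q : Fin n → ℝ}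
    {N N' : ℝ} (hN : 0 < N) (hN' : 0 < N') :
    metricDerivAlong G ξ (t, q, N) = metricDerivAlong G ξ (t, q, N') := by
  rw [metricDerivAlong, metricDerivAlong, hξ t q N N' hN hN']

lemma LapseInvariant.fieldGradient_eq (hξ : LapseInvariant ξ) {t : ℝ} {q : Fin n → ℝ}
    {N N' : ℝ} (hN : 0 < N) (hN' : 0 < N') :
    fieldGradient ξ (t, q, N) = fieldGradient ξ (t, q, N') := by
  ext β α
  exact (hξ.apply α).Dq_eq hN hN' β

theorem ω_div_add_Dt_χ_eq_and_Dt_f_eq_zero (hn : 1 ≤ n)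
    (hGinv : ∀ q, (of fun μ ν => G q μ ν).det ≠ 0) (hVne : ∀ q, V q ≠ 0)
    (hξ : LapseInvariant ξ) (hf : LapseInvariant f)
    (hP : ∀ x ∈ positiveLapse n, SymmetryConditionsAt G V χ ω f ξ x) :
    ∀ x ∈ positiveLapse n, ω x / x.2.2 + Dt χ x = -(∑ α, ξ x α * pd V α x.2.1) / V x.2.1
      ∧ Dt f x = 0 := by
  rintro ⟨t, q, N⟩ (hN : 0 < N)
  have : Nonempty (Fin n) := ⟨⟨0, hn⟩⟩
  have h2N : 0 < 2 * N := by positivity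
  have hg : of (G q) ≠ 0 := fun h0 => hGinv q (by simp [h0])
  have hinv :
      ω (t, q, 2 * N) / (2 * N) + Dt χ (t, q, 2 * N) = ω (t, q, N) / N + Dt χ (t, q, N) := by
    have hlie := (hP (t, q, 2 * N) h2N).lie
    rw [hξ.metricDerivAlong_eq h2N hN, hξ.fieldGradient_eq h2N hN, (hP (t, q, N) hN).lie] at hlie
    exact smul_left_injective ℝ hg hlie.symm
  have e₁ := (hP (t, q, N) hN).velocity_free
  have e₂ := (hP (t, q, 2 * N) h2N).velocity_free
  rw [hξ t q (2 * N) N h2N hN, hf.Dt_eq h2N hN] at e₂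
  dsimp only at e₁ e₂ ⊢
  set c := ∑ α, ξ (t, q, N) α * pd V α q
  set r := ω (t, q, N) / N + Dt χ (t, q, N) with hr
  have k₁ : N * (c + V q * r) + Dt f (t, q, N) = 0 := by
    rw [hr]; field_simp; linear_combination e₁
  have k₂ : 2 * N * (c + V q * r) + Dt f (t, q, N) = 0 := by
    rw [← hinv]; field_simp; linear_combination e₂
  have hcr : c + V q * r = 0 :=
    (mul_eq_zero.mp (by linear_combination k₂ - k₁ : N * (c + V q * r) = 0)).resolve_left hN.ne'
  refine ⟨?_, by linear_combination k₁ - N * hcr⟩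
  field_simp [hVne q]
  linear_combination hcr

lemma lieG_slice_eq (hGsymm : ∀ q μ ν, G q μ ν = G q ν μ) {t : ℝ} {q : Fin n → ℝ} {N : ℝ}
    (hξ : ∀ α, DifferentiableAt ℝ (fun y => ξ y α) (t, q, N)) (μ ν : Fin n) :
    lieG (fun p α => ξ (t, p, N) α) G q μ ν
      = (metricDerivAlong G ξ (t, q, N) + fieldGradient ξ (t, q, N) * of (G q)
          + (fieldGradient ξ (t, q, N) * of (G q))ᵀ) μ ν := by
  simp only [lieG, Matrix.add_apply, transpose_apply, mul_apply, metricDerivAlong,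
    Matrix.sum_apply, Matrix.smul_apply, fieldGradient, of_apply, smul_eq_mul, pd_eq_Dq (hξ _),
    Finset.sum_add_distrib, hGsymm q μ]

end Global

theorem variational_symmetry_criterion_consequences (n : ℕ) (hn : 1 ≤ n)
    (G : (Fin n → ℝ) → Fin n → Fin n → ℝ) (V : (Fin n → ℝ) → ℝ)
    (hGsymm : ∀ q μ ν, G q μ ν = G q ν μ)
    (hGinv : ∀ q, (Matrix.of fun μ ν => G q μ ν).det ≠ 0)
    (hVne : ∀ q, V q ≠ 0)
    (χ ω f : ℝ × (Fin n → ℝ) × ℝ → ℝ) (ξ : ℝ × (Fin n → ℝ) × ℝ → Fin n → ℝ)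
    (hχ : ContDiffOn ℝ (⊤ : ℕ∞) χ {x : ℝ × (Fin n → ℝ) × ℝ | 0 < x.2.2})
    (hξ : ∀ α, ContDiffOn ℝ (⊤ : ℕ∞) (fun x => ξ x α) {x : ℝ × (Fin n → ℝ) × ℝ | 0 < x.2.2})
    (hf : ContDiffOn ℝ (⊤ : ℕ∞) f {x : ℝ × (Fin n → ℝ) × ℝ | 0 < x.2.2})
    -- the variational-symmetry criterion `pr¹X(L) + L·D(χ) = D(f)`, identically in
    -- `(t,q,N,v,w)` with `N > 0`; the four summands of `pr¹X(L)` are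
    -- `Σ ξ^α ∂L/∂q^α`, `ω ∂L/∂N`, `Σ φ^α ∂L/∂v^α` (with `φ^α = D(ξ^α) − v^α D(χ)`),
    -- while `χ ∂L/∂t = 0` since `L` has no explicit time dependence
    (hcrit : ∀ x : ℝ × (Fin n → ℝ) × ℝ, 0 < x.2.2 → ∀ v : Fin n → ℝ, ∀ w : ℝ,
      (∑ α : Fin n, ξ x α *
          ((1 / (2 * x.2.2)) * (∑ κ : Fin n, ∑ lam : Fin n,
              pd (fun p => G p κ lam) α x.2.1 * v κ * v lam)
            - x.2.2 * pd V α x.2.1))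
      + ω x * (-(1 / (2 * x.2.2 ^ 2)) * (∑ κ : Fin n, ∑ lam : Fin n,
              G x.2.1 κ lam * v κ * v lam) - V x.2.1)
      + (∑ α : Fin n, (Dtot (fun y => ξ y α) x v w - v α * Dtot χ x v w) *
          ((1 / (2 * x.2.2)) * ((∑ κ : Fin n, G x.2.1 κ α * v κ)
            + (∑ lam : Fin n, G x.2.1 α lam * v lam))))
      + ((1 / (2 * x.2.2)) * (∑ κ : Fin n, ∑ lam : Fin n, G x.2.1 κ lam * v κ * v lam)
          - x.2.2 * V x.2.1) * Dtot χ x v w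
      = Dtot f x v w) :
    -- χ depends only on t
    (∀ t q N q' N', 0 < N → 0 < N' → χ (t, q, N) = χ (t, q', N'))
    -- each ξ^α depends only on q
    ∧ (∀ (α : Fin n) t t' q N N', 0 < N → 0 < N' → ξ (t, q, N) α = ξ (t', q, N') α)
    -- f is constant
    ∧ (∀ x x' : ℝ × (Fin n → ℝ) × ℝ, 0 < x.2.2 → 0 < x'.2.2 → f x = f x')
    -- ω = −N (Σ ξ^α ∂V/∂q^α)/V − N dχ/dt
    ∧ (∀ t q N, 0 < N →
        ω (t, q, N) = -N * (∑ α : Fin n, ξ (t, q, N) α * pd V α q) / V q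
          - N * Dt χ (t, q, N))
    -- with τ := −(Σ ξ^α ∂V/∂q^α)/V one has £_ξ G = τ G and £_ξ V = −τ V
    ∧ (∀ t N, 0 < N →
        (∀ q μ ν, lieG (fun p α => ξ (t, p, N) α) G q μ ν
            = (-(∑ α : Fin n, ξ (t, q, N) α * pd V α q) / V q) * G q μ ν)
        ∧ (∀ q, lieV (fun p α => ξ (t, p, N) α) V q
            = -(-(∑ α : Fin n, ξ (t, q, N) α * pd V α q) / V q) * V q)) := by
  have hχd : DifferentiableOn ℝ χ (positiveLapse n) := hχ.differentiableOn (by simp)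
  have hξd α : DifferentiableOn ℝ (fun x => ξ x α) (positiveLapse n) :=
    (hξ α).differentiableOn (by simp)
  have hfd : DifferentiableOn ℝ f (positiveLapse n) := hf.differentiableOn (by simp)
  have hP (x) (hx : x ∈ positiveLapse n) : SymmetryConditionsAt G V χ ω f ξ x :=
    SymmetryCriterionAt.symmetryConditionsAt hn hGsymm hx (hGinv x.2.1) (hcrit x hx)
  have hξN : LapseInvariant ξ := fun t q N N' hN hN' => funext fun α =>
    lapseInvariant_of_DN_eq_zero (hξd α) (fun x hx => (hP x hx).DN_ξ α) t q N N' hN hN'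
  have hfN := lapseInvariant_of_DN_eq_zero hfd fun x hx => (hP x hx).DN_f
  have hDq_f_Dt_ξ := Dq_f_eq_zero_and_Dt_ξ_eq_zero hGinv hξN hfN hP
  have hτ := ω_div_add_Dt_χ_eq_and_Dt_f_eq_zero hn hGinv hVne hξN hfN hP
  refine ⟨fun t q N q' N' hN hN' => eq_of_partials_eq_zero hχd hN hN' fun z hz => ?_,
    fun α t t' q N N' hN hN' => eq_of_partials_eq_zero (hξd α) hN hN' fun z hz => ?_,
    fun x x' hx hx' => eq_of_partials_eq_zero hfd hx hx' fun z hz => ?_,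
    fun t q N hN => ?_, fun t N hN => ⟨fun q μ ν => ?_, fun q => ?_⟩⟩
  · simp [(hP z hz).DN_χ, (hP z hz).Dq_χ]
  · simp [(hDq_f_Dt_ξ z hz).2 α, (hP z hz).DN_ξ α]
  · simp [(hτ z hz).2, (hDq_f_Dt_ξ z hz).1, (hP z hz).DN_f]
  · have := (hτ (t, q, N) hN).1
    field_simp at this ⊢
    linear_combination this
  · rw [lieG_slice_eq hGsymm fun α => (hξd α).differentiableAt (isOpen_positiveLapse.mem_nhds hN),
      (hP (t, q, N) hN).lie, ← (hτ (t, q, N) hN).1]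
    rfl
  · simp only [lieV]
    field_simp [hVne q]
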